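/- arXiv:2104.12940 — 2 statements merged into one kernel-verified Lean document; each statement's English description precedes it below -/
import Mathlib

section
/- There exists r₁ > 0 such that for every r ≥ r₁ and every y = (y′, y_N) ∈ ℝᴺ with |y − a_r| ≥ r/2 and y_N ≥ r/2, one has 1/2 ≤ ‖f_y‖_{L^p(ℝᴺ)} ≤ 3/2. -/
/-! After translating by `y`, `‖f_y‖_p^p = ∫ w |φ|^p` with a weight `0 ≤ w ≤ 1`, so it is at most
`‖φ‖_p^p = 1`. For the lower bound choose `R` with `∫_{B_R(0)} |φ|^p > 2^{-p}`. Once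
`r/2 ≥ R + max(2ρ, 1)`, every point of `B_R(y)` is at distance `≥ 2ρ` from `a_r` and at height
`≥ 1`, so both cutoffs equal `1` there and `w = 1` on `B_R(0)`. -/

open MeasureTheory Filter Metric

noncomputable section

abbrev Euc (N : ℕ) := EuclideanSpace ℝ (Fin N)

/-- The last coordinate `x_N` of a point of `ℝ^N`. -/
def lastCoe (N : ℕ) (x : Euc N) : ℝ :=
  if h : 0 < N then x ⟨N - 1, Nat.sub_lt h one_pos⟩ else 0

/-- The upper half space `ℝ₊ᴺ = {x : x_N > 0}`. -/
def upperHalf (N : ℕ) : Set (Euc N) := {x | 0 < lastCoe N x}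

/-- The unit vector in the last coordinate direction. -/
def eVecN (N : ℕ) : Euc N :=
  if h : 0 < N then EuclideanSpace.single ⟨N - 1, Nat.sub_lt h one_pos⟩ (1 : ℝ) else 0

/-- The critical fractional Sobolev exponent `2*_s = 2N/(N-2s)`. -/
def twoStar (N : ℕ) (s : ℝ) : ℝ := 2 * N / (N - 2 * s)

/-- The Gagliardo kernel `|u x - u y|² / |x-y|^{N+2s}`. -/
def fracKernel (N : ℕ) (s : ℝ) (u : Euc N → ℝ) (q : Euc N × Euc N) : ℝ :=
  (u q.1 - u q.2) ^ 2 / ‖q.1 - q.2‖ ^ ((N : ℝ) + 2 * s)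

/-- The Gagliardo seminorm (squared) `E_s(u)`. -/
def Es (N : ℕ) (s : ℝ) (u : Euc N → ℝ) : ℝ := ∫ q : Euc N × Euc N, fracKernel N s u q

/-- Membership in the fractional Sobolev space `H^s(ℝᴺ)`. -/
def memHs (N : ℕ) (s : ℝ) (u : Euc N → ℝ) : Prop :=
  MemLp u 2 (volume : Measure (Euc N)) ∧
    Integrable (fracKernel N s u) (volume : Measure (Euc N × Euc N))

/-- Squared `H^s` norm: `‖u‖_s² = ‖u‖_{L²}² + E_s(u)`. -/
def hsNormSq (N : ℕ) (s : ℝ) (u : Euc N → ℝ) : ℝ := (∫ x, (u x) ^ 2) + Es N s u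

/-- `L^p` norm `(∫ |u|^p)^{1/p}`. -/
def lpNormP (N : ℕ) (p : ℝ) (u : Euc N → ℝ) : ℝ := (∫ x, |u x| ^ p) ^ (1 / p)

/-- The ground state level `M_∞`. -/
def MinftyC (N : ℕ) (s p : ℝ) : ℝ :=
  sInf {c | ∃ u : Euc N → ℝ, memHs N s u ∧ (∫ x, |u x| ^ p) = 1 ∧ c = hsNormSq N s u}

/-- Membership in `X₀^s(Ω)`: an `H^s` function vanishing a.e. outside `Ω`. -/
def memX0 (N : ℕ) (s : ℝ) (Ω : Set (Euc N)) (u : Euc N → ℝ) : Prop :=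
  memHs N s u ∧ ∀ᵐ x : Euc N, x ∉ Ω → u x = 0

/-- `Ω` is "the half space with a hole": an open set whose closure lies in the open upper
half space, with `ℝ₊ᴺ \ Ω ⊆ B_ρ(a_r) ⊆ ℝ₊ᴺ`. -/
structure IsHalfSpaceWithHole (N : ℕ) (ρ : ℝ) (ar : Euc N) (Ω : Set (Euc N)) : Prop where
  isOpen : IsOpen Ω
  closure_subset : closure Ω ⊆ upperHalf N
  hole_subset : upperHalf N \ Ω ⊆ ball ar ρ
  ball_subset : ball ar ρ ⊆ upperHalf N

/-- The fractional Dirichlet bilinear form. -/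
def fracForm (N : ℕ) (s : ℝ) (u v : Euc N → ℝ) : ℝ :=
  ∫ q : Euc N × Euc N, (u q.1 - u q.2) * (v q.1 - v q.2) / ‖q.1 - q.2‖ ^ ((N : ℝ) + 2 * s)

/-- Weak solution of `(-Δ)^s u + u = |u|^{p-2} u` in `Ω` (`Ω = univ` for the whole space). -/
def isWeakSolution (N : ℕ) (s p : ℝ) (Ω : Set (Euc N)) (u : Euc N → ℝ) : Prop :=
  memX0 N s Ω u ∧ ∀ v : Euc N → ℝ, memX0 N s Ω v →
    fracForm N s u v + (∫ x, u x * v x) = ∫ x, |u x| ^ (p - 2) * u x * v x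

/-- `χ(t) = 1` for `t ≤ 1` and `1/t` for `t ≥ 1`. -/
def chiFun (t : ℝ) : ℝ := if t ≤ 1 then 1 else 1 / t

/-- The barycenter-type map `β(u) = ∫ u(x)² χ(|x|) x dx`. -/
def betaMap (N : ℕ) (u : Euc N → ℝ) : Euc N := ∫ x : Euc N, ((u x) ^ 2 * chiFun ‖x‖) • x

/-- The smooth radial cutoff `ξ` relative to `ρ`. -/
def IsXiCutoff (ρ : ℝ) (ξ : ℝ → ℝ) : Prop :=
  ContDiff ℝ (⊤ : ℕ∞) ξ ∧ (∀ t, 0 ≤ ξ t ∧ ξ t ≤ 1) ∧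
    (∀ t, 0 ≤ t → t ≤ ρ → ξ t = 0) ∧ ∀ t, 2 * ρ ≤ t → ξ t = 1

/-- The smooth vertical cutoff `η`. -/
def IsEtaCutoff (η : ℝ → ℝ) : Prop :=
  ContDiff ℝ (⊤ : ℕ∞) η ∧ (∀ t, 0 ≤ η t ∧ η t ≤ 1) ∧
    (∀ t, t ≤ 0 → η t = 0) ∧ ∀ t, 1 ≤ t → η t = 1

/-- `φ` is a minimizer for `M_∞`. -/
def isMinimizer (N : ℕ) (s p : ℝ) (φ : Euc N → ℝ) : Prop :=
  memHs N s φ ∧ (∫ x, |φ x| ^ p) = 1 ∧ hsNormSq N s φ = MinftyC N s p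

/-- `f_y(x) = ξ(|x - a_r|) η(x_N) φ(x - y)`. -/
def cutFun (N : ℕ) (ξ η : ℝ → ℝ) (ar : Euc N) (φ : Euc N → ℝ) (y x : Euc N) : ℝ :=
  ξ ‖x - ar‖ * η (lastCoe N x) * φ (x - y)

/-- `Ψ_y = f_y / ‖f_y‖_{L^p}`. -/
def psiFun (N : ℕ) (p : ℝ) (ξ η : ℝ → ℝ) (ar : Euc N) (φ : Euc N → ℝ) (y : Euc N) :
    Euc N → ℝ :=
  fun x => cutFun N ξ η ar φ y x / lpNormP N p (cutFun N ξ η ar φ y)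

/-- The constrained level `c_r`. -/
def crVal (N : ℕ) (s p : ℝ) (Ω : Set (Euc N)) (ar : Euc N) : ℝ :=
  sInf {c | ∃ u : Euc N → ℝ, memX0 N s Ω u ∧ (∫ x in Ω, |u x| ^ p) = 1 ∧
    betaMap N u = ar ∧ c = hsNormSq N s u}

/-- The energy functional on `X₀^s(Ω_r)`. -/
def Ifun (N : ℕ) (s p : ℝ) (Ω : Set (Euc N)) (u : Euc N → ℝ) : ℝ :=
  (1 / 2) * hsNormSq N s u - (1 / p) * ∫ x in Ω, |u x| ^ p

/-- The limit energy functional on `H^s(ℝᴺ)`. -/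
def IinfFun (N : ℕ) (s p : ℝ) (u : Euc N → ℝ) : ℝ :=
  (1 / 2) * hsNormSq N s u - (1 / p) * ∫ x, |u x| ^ p

/-- The pairing `⟨I'(u), v⟩`. -/
def Ideriv (N : ℕ) (s p : ℝ) (u v : Euc N → ℝ) : ℝ :=
  fracForm N s u v + (∫ x, u x * v x) - ∫ x, |u x| ^ (p - 2) * u x * v x

open Topology

theorem tendsto_setIntegral_closedBall_atTop {E F : Type*} [NormedAddCommGroup E]
    [MeasurableSpace E] [OpensMeasurableSpace E] [NormedAddCommGroup F] [NormedSpace ℝ F]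
    {μ : Measure E} {f : E → F} (hf : Integrable f μ) :
    Tendsto (fun R : ℝ => ∫ x in closedBall 0 R, f x ∂μ) atTop (𝓝 (∫ x, f x ∂μ)) := by
  have hunion : ⋃ R : ℝ, closedBall (0 : E) R = Set.univ :=
    Set.eq_univ_of_forall fun x => Set.mem_iUnion.2 ⟨‖x‖, by simp⟩
  have h := tendsto_setIntegral_of_monotone (μ := μ) (fun R : ℝ => measurableSet_closedBall)
    (fun R R' h => closedBall_subset_closedBall h) (by rw [hunion]; exact hf.integrableOn)
  rwa [hunion, Measure.restrict_univ] at h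

section UnitIntervalWeight

variable {X : Type*} [MeasurableSpace X] {μ : Measure X} {w G : X → ℝ}

theorem integrable_mul_of_mem_Icc (hG : Integrable G μ) (hw : AEStronglyMeasurable w μ)
    (hw01 : ∀ x, w x ∈ Set.Icc 0 1) : Integrable (fun x => w x * G x) μ :=
  hG.bdd_mul hw (.of_forall fun x => by
    rw [Real.norm_eq_abs, abs_of_nonneg (hw01 x).1]; exact (hw01 x).2)

theorem setIntegral_le_integral_mul_of_eqOn_one {K : Set X} (hK : MeasurableSet K)
    (hG : Integrable G μ) (hG0 : 0 ≤ G) (hw : AEStronglyMeasurable w μ)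
    (hw01 : ∀ x, w x ∈ Set.Icc 0 1) (hwK : Set.EqOn w 1 K) :
    ∫ x in K, G x ∂μ ≤ ∫ x, w x * G x ∂μ := by
  rw [← integral_indicator hK]
  refine integral_mono (hG.indicator hK) (integrable_mul_of_mem_Icc hG hw hw01) fun x => ?_
  by_cases hx : x ∈ K
  · simp [Set.indicator_of_mem hx, hwK hx]
  · simpa [Set.indicator_of_notMem hx] using mul_nonneg (hw01 x).1 (hG0 x)

theorem integral_mul_le_integral_of_mem_Icc (hG : Integrable G μ) (hG0 : 0 ≤ G)
    (hw : AEStronglyMeasurable w μ) (hw01 : ∀ x, w x ∈ Set.Icc 0 1) :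
    ∫ x, w x * G x ∂μ ≤ ∫ x, G x ∂μ :=
  integral_mono (integrable_mul_of_mem_Icc hG hw hw01) hG fun x =>
    mul_le_of_le_one_left (hG0 x) (hw01 x).2

end UnitIntervalWeight

theorem lastCoe_add {N : ℕ} (x y : Euc N) : lastCoe N (x + y) = lastCoe N x + lastCoe N y := by
  unfold lastCoe; split_ifs <;> simp

theorem abs_lastCoe_le_norm {N : ℕ} (x : Euc N) : |lastCoe N x| ≤ ‖x‖ := by
  unfold lastCoe; split_ifs
  · exact PiLp.norm_apply_le x _
  · simp

theorem continuous_lastCoe (N : ℕ) : Continuous (lastCoe N) := by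
  unfold lastCoe; split_ifs
  · exact (EuclideanSpace.proj _).continuous
  · exact continuous_const

theorem rpow_one_div_mem_Icc {a b p I : ℝ} (ha : 0 ≤ a) (hb : 0 ≤ b) (hp : 0 < p)
    (haI : a ^ p ≤ I) (hIb : I ≤ b ^ p) : I ^ (1 / p) ∈ Set.Icc a b := by
  have hI : 0 ≤ I := (Real.rpow_nonneg ha p).trans haI
  rw [one_div]
  exact ⟨(Real.le_rpow_inv_iff_of_pos ha hI hp).2 haI,
    (Real.rpow_inv_le_iff_of_pos hI hb hp).2 hIb⟩

theorem abs_mul_rpow_mem_Icc {u v p : ℝ} (hu : u ∈ Set.Icc 0 1) (hv : v ∈ Set.Icc 0 1)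
    (hp : 0 ≤ p) : |u * v| ^ p ∈ Set.Icc 0 1 := by
  have huv := mul_nonneg hu.1 hv.1
  rw [abs_of_nonneg huv]
  exact ⟨Real.rpow_nonneg huv p, Real.rpow_le_one huv (mul_le_one₀ hu.2 hv.1 hv.2) hp⟩

theorem integral_abs_cutFun_rpow {N : ℕ} (ξ η : ℝ → ℝ) (ar : Euc N) (φ : Euc N → ℝ)
    (y : Euc N) (p : ℝ) :
    ∫ x, |cutFun N ξ η ar φ y x| ^ p =
      ∫ z, |ξ ‖z + y - ar‖ * η (lastCoe N (z + y))| ^ p * |φ z| ^ p := by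
  conv_rhs => rw [← integral_sub_right_eq_self _ y]
  simp only [cutFun, sub_add_cancel, abs_mul]
  congr 1 with x
  rw [Real.mul_rpow (by positivity) (abs_nonneg _)]

theorem cutoff_eq_one_of_norm_le {N : ℕ} {ξ η : ℝ → ℝ} {ρ R : ℝ} {ar y z : Euc N}
    (hξ : ∀ t, 2 * ρ ≤ t → ξ t = 1) (hη : ∀ t, 1 ≤ t → η t = 1)
    (hy : R + 2 * ρ ≤ ‖y - ar‖) (hyN : R + 1 ≤ lastCoe N y) (hz : ‖z‖ ≤ R) :
    ξ ‖z + y - ar‖ * η (lastCoe N (z + y)) = 1 := by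
  have hfar : ‖y - ar‖ ≤ ‖z + y - ar‖ + ‖z‖ := by
    simpa [add_sub_assoc] using norm_sub_le (z + y - ar) z
  have hzN := (abs_le.1 (abs_lastCoe_le_norm z)).1
  rw [hξ _ (by linarith), hη _ (by rw [lastCoe_add]; linarith), one_mul]

theorem integral_abs_cutFun_rpow_mem_Icc {N : ℕ} {ρ p R : ℝ} {ξ η : ℝ → ℝ} {ar y : Euc N}
    {φ : Euc N → ℝ} (hξ : IsXiCutoff ρ ξ) (hη : IsEtaCutoff η) (hp : 0 < p)
    (hφ : Integrable (fun z => |φ z| ^ p)) (hfar : R + 2 * ρ ≤ ‖y - ar‖)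
    (hhigh : R + 1 ≤ lastCoe N y) :
    ∫ x, |cutFun N ξ η ar φ y x| ^ p ∈
      Set.Icc (∫ z in closedBall 0 R, |φ z| ^ p) (∫ z, |φ z| ^ p) := by
  set w : Euc N → ℝ := fun z => |ξ ‖z + y - ar‖ * η (lastCoe N (z + y))| ^ p
  have hw01 : ∀ z, w z ∈ Set.Icc 0 1 := fun z =>
    abs_mul_rpow_mem_Icc (hξ.2.1 _) (hη.2.1 _) hp.le
  have hw : Continuous w := by
    have := hξ.1.continuous; have := hη.1.continuous; have := continuous_lastCoe N
    exact Continuous.rpow_const (by fun_prop) fun _ => Or.inr hp.le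
  have hwK : Set.EqOn w 1 (closedBall 0 R) := fun z hz => by
    simp only [w, cutoff_eq_one_of_norm_le hξ.2.2.2 hη.2.2.2 hfar hhigh
      (mem_closedBall_zero_iff.1 hz), abs_one, Real.one_rpow, Pi.one_apply]
  have hφ0 : 0 ≤ fun z => |φ z| ^ p := fun z => by positivity
  rw [integral_abs_cutFun_rpow]
  exact ⟨setIntegral_le_integral_mul_of_eqOn_one measurableSet_closedBall hφ hφ0
      hw.aestronglyMeasurable hw01 hwK,
    integral_mul_le_integral_of_mem_Icc hφ hφ0 hw.aestronglyMeasurable hw01⟩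

theorem cutFun_Lp_norm_bounds_general (N : ℕ) (s p : ℝ)
    (hp : p ∈ Set.Ioo (2 : ℝ) (twoStar N s))
    (ρ : ℝ) (a : Euc N)
    (ξ η : ℝ → ℝ) (hξ : IsXiCutoff ρ ξ) (hη : IsEtaCutoff η)
    (φ : Euc N → ℝ) (hφ : isMinimizer N s p φ) :
    ∃ r₁ > (0 : ℝ), ∀ r ≥ r₁, ∀ y : Euc N,
      r / 2 ≤ ‖y - (a + r • eVecN N)‖ → r / 2 ≤ lastCoe N y →
        1 / 2 ≤ lpNormP N p (cutFun N ξ η (a + r • eVecN N) φ y) ∧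
        lpNormP N p (cutFun N ξ η (a + r • eVecN N) φ y) ≤ 3 / 2 := by
  have hp0 : 0 < p := by linarith [hp.1]
  have hφ1 : ∫ z, |φ z| ^ p = 1 := hφ.2.1
  have hφint : Integrable (fun z => |φ z| ^ p) :=
    .of_integral_ne_zero (by rw [hφ1]; exact one_ne_zero)
  have hhalf : (1 / 2 : ℝ) ^ p < ∫ z, |φ z| ^ p := by
    rw [hφ1]; exact Real.rpow_lt_one (by norm_num) (by norm_num) hp0
  obtain ⟨R, hR, hR0⟩ := (((tendsto_setIntegral_closedBall_atTop hφint).eventually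
    (lt_mem_nhds hhalf)).and (eventually_ge_atTop 0)).exists
  refine ⟨2 * (R + max (2 * ρ) 1), by positivity, fun r hr y hy hyN => ?_⟩
  have hfar : R + 2 * ρ ≤ ‖y - (a + r • eVecN N)‖ := by linarith [le_max_left (2 * ρ) 1]
  have hhigh : R + 1 ≤ lastCoe N y := by linarith [le_max_right (2 * ρ) 1]
  have hI := integral_abs_cutFun_rpow_mem_Icc hξ hη hp0 hφint hfar hhigh
  have hnorm := rpow_one_div_mem_Icc (by norm_num) zero_le_one hp0 (hR.le.trans hI.1)
    (hI.2.trans_eq (by rw [hφ1, Real.one_rpow]))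
  exact ⟨hnorm.1, hnorm.2.trans (by norm_num)⟩

/-- `1/2 ≤ ‖f_y‖_{L^p} ≤ 3/2` for large `r` and admissible `y`. -/
theorem cutFun_Lp_norm_bounds (N : ℕ) (s p : ℝ)
    (hs : s ∈ Set.Ioo (0 : ℝ) 1) (hN : 2 * s < N)
    (hp : p ∈ Set.Ioo (2 : ℝ) (twoStar N s))
    (ρ : ℝ) (hρ : 0 < ρ) (a : Euc N) (ha : lastCoe N a = 0)
    (ξ η : ℝ → ℝ) (hξ : IsXiCutoff ρ ξ) (hη : IsEtaCutoff η)
    (φ : Euc N → ℝ) (hφ : isMinimizer N s p φ) :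
    ∃ r₁ > (0 : ℝ), ∀ r ≥ r₁, ∀ y : Euc N,
      r / 2 ≤ ‖y - (a + r • eVecN N)‖ → r / 2 ≤ lastCoe N y →
        1 / 2 ≤ lpNormP N p (cutFun N ξ η (a + r • eVecN N) φ y) ∧
        lpNormP N p (cutFun N ξ η (a + r • eVecN N) φ y) ≤ 3 / 2 :=
  cutFun_Lp_norm_bounds_general N s p hp ρ a ξ η hξ hη φ hφ

end
end

section
/- Let u ∈ L²(ℝᴺ) be radially symmetric and radially nonincreasing, i.e. u(x) = U(|x|) with U : [0,∞) → [0,∞) nonincreasing. Then lim_{|y|→∞} ∫_{{x ∈ ℝᴺ : ⟨x, y⟩ < 0}} u(x − y)² χ(|x|) |x| dx = 0, where χ(t) = 1 for 0 ≤ t ≤ 1 and χ(t) = 1/t for t ≥ 1. -/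
open MeasureTheory Filter Metric

noncomputable section

/-! On `{⟨x, y⟩ < 0}` one has `‖x - y‖ ≥ ‖y‖` and `χ(‖x‖)‖x‖ ≤ 1`, so after translating, the
integral is bounded by the tail `∫_{‖z‖ ≥ ‖y‖} u²` of an integrable function. -/

lemma chiFun_mul_self_nonneg {t : ℝ} (ht : 0 ≤ t) : 0 ≤ chiFun t * t := by
  unfold chiFun
  split_ifs <;> positivity

lemma chiFun_mul_self_le_one (t : ℝ) : chiFun t * t ≤ 1 := by
  unfold chiFun
  split_ifs with h
  · simpa using h
  · rw [one_div, inv_mul_cancel₀ (by linarith)]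

open scoped RealInnerProductSpace in
lemma norm_le_norm_sub_of_inner_neg {E : Type*} [NormedAddCommGroup E] [InnerProductSpace ℝ E]
    {x y : E} (h : ⟪x, y⟫ < 0) : ‖y‖ ≤ ‖x - y‖ := by
  have : ‖y‖ ^ 2 ≤ ‖x - y‖ ^ 2 := by
    rw [norm_sub_sq_real]
    nlinarith [sq_nonneg ‖x‖]
  exact (pow_le_pow_iff_left₀ (norm_nonneg _) (norm_nonneg _) two_ne_zero).mp this

lemma tendsto_setIntegral_norm_ge_atTop {E F : Type*} [NormedAddCommGroup E] [MeasurableSpace E]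
    [OpensMeasurableSpace E] [NormedAddCommGroup F] [NormedSpace ℝ F] {μ : Measure E}
    {g : E → F} (hg : Integrable g μ) :
    Tendsto (fun R : ℝ => ∫ z in {z | R ≤ ‖z‖}, g z ∂μ) atTop (nhds 0) := by
  have hmeas (R : ℝ) : MeasurableSet {z : E | R ≤ ‖z‖} :=
    measurableSet_le measurable_const continuous_norm.measurable
  simp_rw [← integral_indicator (hmeas _)]
  rw [← integral_zero E F]
  refine tendsto_integral_filter_of_dominated_convergence (fun z => ‖g z‖)
    (Eventually.of_forall fun R => hg.aestronglyMeasurable.indicator (hmeas R))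
    (Eventually.of_forall fun R => ae_of_all _ fun z => norm_indicator_le_norm_self _ _)
    hg.norm (ae_of_all _ fun z => ?_)
  refine tendsto_const_nhds.congr' ?_
  filter_upwards [eventually_gt_atTop ‖z‖] with R hR
  exact (Set.indicator_of_notMem (show z ∉ {z | R ≤ ‖z‖} from not_le.mpr hR) g).symm

open scoped RealInnerProductSpace in
lemma setIntegral_inner_neg_comp_sub_le {E : Type*} [NormedAddCommGroup E]
    [InnerProductSpace ℝ E] [MeasurableSpace E] [BorelSpace E] {μ : Measure E}
    [μ.IsAddRightInvariant] {g w : E → ℝ} (hg : Integrable g μ) (hg0 : 0 ≤ g) (hw0 : 0 ≤ w)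
    (hw1 : w ≤ 1) (y : E) :
    ∫ x in {x | ⟪x, y⟫ < 0}, g (x - y) * w x ∂μ ≤ ∫ z in {z | ‖y‖ ≤ ‖z‖}, g z ∂μ := by
  have hgy : Integrable (fun x => g (x - y)) μ := hg.comp_sub_right y
  calc ∫ x in {x | ⟪x, y⟫ < 0}, g (x - y) * w x ∂μ
      ≤ ∫ x in {x | ⟪x, y⟫ < 0}, g (x - y) ∂μ :=
        integral_mono_of_nonneg (ae_of_all _ fun x => mul_nonneg (hg0 (x - y)) (hw0 x))
          hgy.integrableOn (ae_of_all _ fun x => mul_le_of_le_one_right (hg0 (x - y)) (hw1 x))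
    _ ≤ ∫ x in (· - y) ⁻¹' {z | ‖y‖ ≤ ‖z‖}, g (x - y) ∂μ :=
        setIntegral_mono_set hgy.integrableOn (ae_of_all _ fun x => hg0 (x - y))
          (Eventually.of_forall fun x hx => norm_le_norm_sub_of_inner_neg hx)
    _ = ∫ z in {z | ‖y‖ ≤ ‖z‖}, g z ∂μ :=
        (measurePreserving_sub_right μ y).setIntegral_preimage_emb
          (measurableEmbedding_subRight y) g _

open scoped RealInnerProductSpace in
theorem radial_translate_halfspace_vanish_general (N : ℕ)
    (u : Euc N → ℝ)
    (hL2 : MemLp u 2 (volume : Measure (Euc N))) :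
    ∀ ε > (0 : ℝ), ∃ R > (0 : ℝ), ∀ y : Euc N, R ≤ ‖y‖ →
      (∫ x in {x : Euc N | ⟪x, y⟫ < 0}, (u (x - y)) ^ 2 * (chiFun ‖x‖ * ‖x‖)) < ε := by
  intro ε hε
  obtain ⟨R, hR⟩ := eventually_atTop.mp
    ((tendsto_setIntegral_norm_ge_atTop hL2.integrable_sq).eventually (gt_mem_nhds hε))
  refine ⟨max R 1, by positivity, fun y hy => ?_⟩
  calc (∫ x in {x : Euc N | ⟪x, y⟫ < 0}, (u (x - y)) ^ 2 * (chiFun ‖x‖ * ‖x‖))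
      ≤ ∫ z in {z | ‖y‖ ≤ ‖z‖}, u z ^ 2 :=
        setIntegral_inner_neg_comp_sub_le hL2.integrable_sq (fun _ => sq_nonneg _)
          (fun x => chiFun_mul_self_nonneg (norm_nonneg x)) (fun x => chiFun_mul_self_le_one _) y
    _ < ε := hR _ (le_of_max_le_left hy)

open scoped RealInnerProductSpace in
/-- for a radially symmetric nonincreasing `u ∈ L²(ℝᴺ)`, the weighted mass
of the translate `u(· - y)` on the half space `{⟨x, y⟩ < 0}` vanishes as `|y| → ∞`. -/
theorem radial_translate_halfspace_vanish (N : ℕ) (hN : 1 ≤ N)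
    (u : Euc N → ℝ) (U : ℝ → ℝ)
    (hrad : ∀ x, u x = U ‖x‖) (hnn : ∀ t : ℝ, 0 ≤ t → 0 ≤ U t)
    (hmono : ∀ t₁ t₂ : ℝ, 0 ≤ t₁ → t₁ ≤ t₂ → U t₂ ≤ U t₁)
    (hL2 : MemLp u 2 (volume : Measure (Euc N))) :
    ∀ ε > (0 : ℝ), ∃ R > (0 : ℝ), ∀ y : Euc N, R ≤ ‖y‖ →
      (∫ x in {x : Euc N | ⟪x, y⟫ < 0}, (u (x - y)) ^ 2 * (chiFun ‖x‖ * ‖x‖)) < ε :=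
  radial_translate_halfspace_vanish_general N u hL2

end
end
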